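/- For R ∈ (0, 1) and v > 0, the equation (κ/R)·Φ(−(1/v)·log κ − v/2) = Φ(−(1/v)·log κ + v/2) has a unique solution κ ∈ (0, ∞), where Φ is the standard normal CDF. -/

import Mathlib

/-!
Put `x = -(1/v) log κ` and `Λ(s) = s²/2 + log Φ(s)`. The equation becomes
`Λ(x + v/2) - Λ(x - v/2) = log (1/R)`, whose right side is positive because `R < 1`.
The derivative `ψ(s) = s + φ(s)/Φ(s)` of `Λ` is strictly increasing: `ψ' > 0` amounts to
`φ(s)(sΦ(s) + φ(s)) < Φ(s)²`, and the difference of the two sides increases from `0` at `-∞`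
because its derivative is positive by the Mills-ratio bound `tφ(t)/(1 + t²) < Φ(-t)`.
Hence the left side is strictly increasing in `x`, and by the mean value theorem it lies between
`vψ(x - v/2)` and `vψ(x + v/2)`. Since `s < ψ(s)` and, again by the Mills bound, `ψ(-t) < 1/t`
for `t > 0`, it takes every positive value.
-/

open Real MeasureTheory Set Filter Topology

noncomputable def stdNormalCDF (x : ℝ) : ℝ :=
  ∫ z in Set.Iio x, Real.exp (-z ^ 2 / 2) / Real.sqrt (2 * Real.pi)

noncomputable def stdNormalPDF (x : ℝ) : ℝ := exp (-x ^ 2 / 2) / √(2 * π)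

lemma stdNormalPDF_pos (x : ℝ) : 0 < stdNormalPDF x := by
  unfold stdNormalPDF; positivity

lemma stdNormalPDF_neg (x : ℝ) : stdNormalPDF (-x) = stdNormalPDF x := by
  simp [stdNormalPDF]

lemma continuous_stdNormalPDF : Continuous stdNormalPDF := by
  unfold stdNormalPDF; fun_prop

lemma integrable_stdNormalPDF : Integrable stdNormalPDF := by
  refine ((integrable_exp_neg_mul_sq one_half_pos).div_const √(2 * π)).congr
    (Eventually.of_forall fun x => ?_)
  simp only [stdNormalPDF]; ring_nf

lemma hasDerivAt_stdNormalPDF (x : ℝ) :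
    HasDerivAt stdNormalPDF (-x * stdNormalPDF x) x := by
  have h : HasDerivAt (fun y : ℝ => -y ^ 2 / 2) (-x) x :=
    ((hasDerivAt_pow 2 x).neg.div_const 2).congr_deriv (by ring)
  exact (h.exp.div_const √(2 * π)).congr_deriv (by rw [stdNormalPDF]; ring)

lemma tendsto_pow_mul_stdNormalPDF_cocompact (n : ℕ) :
    Tendsto (fun x => x ^ n * stdNormalPDF x) (cocompact ℝ) (𝓝 0) := by
  rw [tendsto_zero_iff_norm_tendsto_zero]
  have h := (tendsto_rpow_abs_mul_exp_neg_mul_sq_cocompact one_half_pos n).div_const √(2 * π)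
  rw [zero_div] at h
  refine h.congr fun x => ?_
  rw [Real.rpow_natCast, norm_mul, norm_pow, Real.norm_eq_abs, Real.norm_eq_abs,
    abs_of_pos (stdNormalPDF_pos x), stdNormalPDF]
  ring_nf

lemma stdNormalCDF_eq_integral_Iic (x : ℝ) :
    stdNormalCDF x = ∫ z in Iic x, stdNormalPDF z := by
  rw [stdNormalCDF, ← integral_Iic_eq_integral_Iio]; rfl

lemma stdNormalCDF_sub_stdNormalCDF (a b : ℝ) :
    stdNormalCDF b - stdNormalCDF a = ∫ z in a..b, stdNormalPDF z := by
  rw [stdNormalCDF_eq_integral_Iic, stdNormalCDF_eq_integral_Iic]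
  exact intervalIntegral.integral_Iic_sub_Iic integrable_stdNormalPDF.integrableOn
    integrable_stdNormalPDF.integrableOn

lemma hasDerivAt_stdNormalCDF (x : ℝ) : HasDerivAt stdNormalCDF (stdNormalPDF x) x := by
  have h := intervalIntegral.integral_hasDerivAt_right
    (a := 0) (b := x) integrable_stdNormalPDF.intervalIntegrable
    continuous_stdNormalPDF.stronglyMeasurable.stronglyMeasurableAtFilter
    continuous_stdNormalPDF.continuousAt
  refine (h.const_add (stdNormalCDF 0)).congr_of_eventuallyEq (Eventually.of_forall fun u => ?_)
  simp only [← stdNormalCDF_sub_stdNormalCDF, add_sub_cancel]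

lemma stdNormalCDF_pos (x : ℝ) : 0 < stdNormalCDF x := by
  rw [stdNormalCDF_eq_integral_Iic, setIntegral_pos_iff_support_of_nonneg_ae
    (Eventually.of_forall fun z => (stdNormalPDF_pos z).le) integrable_stdNormalPDF.integrableOn,
    Function.support_eq_univ (stdNormalPDF_pos · |>.ne'), univ_inter]
  simp

lemma tendsto_stdNormalCDF_atBot : Tendsto stdNormalCDF atBot (𝓝 0) := by
  have h := intervalIntegral_tendsto_integral_Iic 0 integrable_stdNormalPDF.integrableOn
    tendsto_id
  rw [← stdNormalCDF_eq_integral_Iic] at h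
  simp_rw [← stdNormalCDF_sub_stdNormalCDF] at h
  simpa using (tendsto_const_nhds (x := stdNormalCDF 0)).sub h

lemma hasDerivAt_mul_stdNormalPDF (x : ℝ) :
    HasDerivAt (fun y => y * stdNormalPDF y) ((1 - x ^ 2) * stdNormalPDF x) x :=
  ((hasDerivAt_id x).mul (hasDerivAt_stdNormalPDF x)).congr_deriv (by simp only [id]; ring)

lemma mul_stdNormalPDF_div_lt_stdNormalCDF_neg (t : ℝ) :
    t * stdNormalPDF t / (1 + t ^ 2) < stdNormalCDF (-t) := by
  set g := fun s => stdNormalCDF (-s) - s * stdNormalPDF s / (1 + s ^ 2)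
  have hderiv : ∀ s, HasDerivAt g (-(2 * stdNormalPDF s / (1 + s ^ 2) ^ 2)) s := by
    intro s
    have hcdf := (hasDerivAt_stdNormalCDF (-s)).comp s (hasDerivAt_neg s)
    have hquot := (hasDerivAt_mul_stdNormalPDF s).div
      ((hasDerivAt_pow 2 s).const_add 1) (by positivity : (1 + s ^ 2) ≠ 0)
    refine (hcdf.sub hquot).congr_deriv ?_
    rw [stdNormalPDF_neg]
    field_simp
    ring
  have hanti : StrictAnti g := strictAnti_of_hasDerivAt_neg hderiv fun s => by
    have := stdNormalPDF_pos s
    simp only [Left.neg_neg_iff]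
    positivity
  have hlim : Tendsto g atTop (𝓝 0) := by
    have hcdf := tendsto_stdNormalCDF_atBot.comp tendsto_neg_atTop_atBot
    have hquot := ((tendsto_pow_mul_stdNormalPDF_cocompact 1).mono_left
      atTop_le_cocompact).div_atTop
        (tendsto_atTop_add_const_left _ 1 (tendsto_pow_atTop two_ne_zero))
    simpa using hcdf.sub hquot
  have h1 := hanti.antitone.le_of_tendsto hlim (t + 1)
  have h2 := hanti (lt_add_one t)
  simp only [g] at h1 h2
  linarith

lemma stdNormalPDF_mul_lt_sq_stdNormalCDF (x : ℝ) :
    stdNormalPDF x * (x * stdNormalCDF x + stdNormalPDF x) < stdNormalCDF x ^ 2 := by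
  set W := fun y => stdNormalCDF y ^ 2 - stdNormalPDF y * (y * stdNormalCDF y + stdNormalPDF y)
  have hderiv : ∀ y, HasDerivAt W
      (stdNormalPDF y * ((1 + y ^ 2) * stdNormalCDF y + y * stdNormalPDF y)) y := by
    intro y
    have hcdf := hasDerivAt_stdNormalCDF y
    have h := (hcdf.pow 2).sub (((hasDerivAt_mul_stdNormalPDF y).mul hcdf).add
      ((hasDerivAt_stdNormalPDF y).mul (hasDerivAt_stdNormalPDF y)))
    refine (h.congr_deriv (by ring)).congr_of_eventuallyEq (Eventually.of_forall fun z => ?_)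
    simp only [W, Pi.sub_apply, Pi.add_apply, Pi.mul_apply, Pi.pow_apply]; ring
  have hmono : StrictMono W := strictMono_of_hasDerivAt_pos hderiv fun y => by
    have hmills := mul_stdNormalPDF_div_lt_stdNormalCDF_neg (-y)
    rw [neg_neg, stdNormalPDF_neg, neg_sq, div_lt_iff₀ (by positivity)] at hmills
    exact mul_pos (stdNormalPDF_pos y) (by linarith)
  have hlim : Tendsto W atBot (𝓝 0) := by
    have hcdf := tendsto_stdNormalCDF_atBot
    have hpdf := (tendsto_pow_mul_stdNormalPDF_cocompact 0).mono_left atBot_le_cocompact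
    have hxpdf := (tendsto_pow_mul_stdNormalPDF_cocompact 1).mono_left atBot_le_cocompact
    simp only [pow_zero, one_mul, pow_one] at hpdf hxpdf
    simpa using ((hcdf.pow 2).sub ((hxpdf.mul hcdf).add (hpdf.mul hpdf))).congr fun y => by
      simp only [W]; ring
  have h1 := hmono.monotone.le_of_tendsto hlim (x - 1)
  have h2 := hmono (sub_one_lt x)
  simp only [W] at h1 h2
  linarith

/-- `tailGap s = E[s - Z | Z < s]` for a standard normal `Z`. -/
noncomputable def tailGap (s : ℝ) : ℝ := s + stdNormalPDF s / stdNormalCDF s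

lemma strictMono_tailGap : StrictMono tailGap := by
  refine strictMono_of_hasDerivAt_pos (f' := fun s =>
    (stdNormalCDF s ^ 2 - stdNormalPDF s * (s * stdNormalCDF s + stdNormalPDF s)) /
      stdNormalCDF s ^ 2) (fun s => ?_) fun s => ?_
  · have hcdf := (stdNormalCDF_pos s).ne'
    refine ((hasDerivAt_id s).add ((hasDerivAt_stdNormalPDF s).div
      (hasDerivAt_stdNormalCDF s) hcdf)).congr_deriv ?_
    field_simp
    ring
  · have := stdNormalCDF_pos s
    exact div_pos (sub_pos.2 (stdNormalPDF_mul_lt_sq_stdNormalCDF s)) (by positivity)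

lemma lt_tailGap (s : ℝ) : s < tailGap s :=
  lt_add_of_pos_right s (div_pos (stdNormalPDF_pos s) (stdNormalCDF_pos s))

lemma tailGap_neg_lt_inv {t : ℝ} (ht : 0 < t) : tailGap (-t) < t⁻¹ := by
  have hmills := mul_stdNormalPDF_div_lt_stdNormalCDF_neg t
  have hcdf := stdNormalCDF_pos (-t)
  rw [div_lt_iff₀ (by positivity)] at hmills
  rw [tailGap, stdNormalPDF_neg, neg_add_lt_iff_lt_add, div_lt_iff₀ hcdf]
  calc stdNormalPDF t < (1 + t ^ 2) * stdNormalCDF (-t) / t := by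
        rw [lt_div_iff₀ ht]; linarith
    _ = (t + t⁻¹) * stdNormalCDF (-t) := by field_simp; ring

noncomputable def tailPotential (s : ℝ) : ℝ := s ^ 2 / 2 + log (stdNormalCDF s)

lemma hasDerivAt_tailPotential (s : ℝ) : HasDerivAt tailPotential (tailGap s) s :=
  (((hasDerivAt_pow 2 s).div_const 2).add ((hasDerivAt_stdNormalCDF s).log
    (stdNormalCDF_pos s).ne')).congr_deriv (by rw [tailGap]; ring)

lemma continuous_tailPotential : Continuous tailPotential :=
  continuous_iff_continuousAt.2 fun s => (hasDerivAt_tailPotential s).continuousAt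

noncomputable def tailPotentialIncrement (v x : ℝ) : ℝ :=
  tailPotential (x + v / 2) - tailPotential (x - v / 2)

lemma strictMono_tailPotentialIncrement {v : ℝ} (hv : 0 < v) :
    StrictMono (tailPotentialIncrement v) :=
  strictMono_of_hasDerivAt_pos (fun x => ((hasDerivAt_tailPotential (x + v / 2)).comp_add_const
    x (v / 2)).sub ((hasDerivAt_tailPotential (x - v / 2)).comp_sub_const x (v / 2)))
    fun x => sub_pos.2 (strictMono_tailGap (by linarith))

lemma continuous_tailPotentialIncrement (v : ℝ) : Continuous (tailPotentialIncrement v) :=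
  (continuous_tailPotential.comp (continuous_add_const _)).sub
    (continuous_tailPotential.comp (continuous_sub_right _))

lemma tailPotentialIncrement_mem_Ioo {v : ℝ} (hv : 0 < v) (x : ℝ) :
    tailPotentialIncrement v x ∈ Ioo (v * tailGap (x - v / 2)) (v * tailGap (x + v / 2)) := by
  obtain ⟨c, hc, hslope⟩ := exists_hasDerivAt_eq_slope tailPotential tailGap
    (by linarith : x - v / 2 < x + v / 2) continuous_tailPotential.continuousOn
    fun s _ => hasDerivAt_tailPotential s
  rw [show x + v / 2 - (x - v / 2) = v by ring, eq_div_iff hv.ne', mul_comm] at hslope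
  rw [tailPotentialIncrement, ← hslope]
  exact ⟨mul_lt_mul_of_pos_left (strictMono_tailGap hc.1) hv,
    mul_lt_mul_of_pos_left (strictMono_tailGap hc.2) hv⟩

lemma mem_range_tailPotentialIncrement {v c : ℝ} (hv : 0 < v) (hc : 0 < c) :
    c ∈ range (tailPotentialIncrement v) := by
  refine mem_range_of_exists_le_of_exists_ge (continuous_tailPotentialIncrement v)
    ⟨-(v / c) - v / 2, ?_⟩ ⟨c / v + v / 2, ?_⟩
  · calc tailPotentialIncrement v (-(v / c) - v / 2) ≤ v * tailGap (-(v / c)) := by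
          simpa using (tailPotentialIncrement_mem_Ioo hv (-(v / c) - v / 2)).2.le
      _ ≤ v * (v / c)⁻¹ := by gcongr; exact (tailGap_neg_lt_inv (div_pos hv hc)).le
      _ = c := by field_simp
  · calc c = v * (c / v) := by field_simp
      _ ≤ v * tailGap (c / v) := by gcongr; exact (lt_tailGap _).le
      _ ≤ tailPotentialIncrement v (c / v + v / 2) := by
          simpa using (tailPotentialIncrement_mem_Ioo hv (c / v + v / 2)).1.le

lemma div_mul_stdNormalCDF_eq_iff {R v κ : ℝ} (hR : 0 < R) (hv : v ≠ 0) (hκ : 0 < κ) :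
    (κ / R) * stdNormalCDF (-(1 / v) * log κ - v / 2) =
        stdNormalCDF (-(1 / v) * log κ + v / 2) ↔
      tailPotentialIncrement v (-(1 / v) * log κ) = -log R := by
  set x := -(1 / v) * log κ
  have hlogκ : log κ = -(v * x) := by simp only [x]; field_simp
  have ha := stdNormalCDF_pos (x - v / 2)
  have hb := stdNormalCDF_pos (x + v / 2)
  rw [← (log_injOn_pos.eq_iff (by positivity : 0 < κ / R * stdNormalCDF (x - v / 2)) hb),
    log_mul (by positivity) ha.ne', log_div hκ.ne' hR.ne', hlogκ, tailPotentialIncrement,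
    tailPotential, tailPotential]
  constructor <;> intro h <;> linarith

/-- for R ∈ (0,1) and v > 0, the equation
(κ/R)·Φ(−(1/v)·log κ − v/2) = Φ(−(1/v)·log κ + v/2) has a unique solution
κ ∈ (0, ∞). -/
theorem kappa_unique (R v : ℝ) (hR : R ∈ Set.Ioo (0 : ℝ) 1) (hv : 0 < v) :
    ∃! κ : ℝ, 0 < κ ∧
      (κ / R) * stdNormalCDF (-(1 / v) * Real.log κ - v / 2) =
        stdNormalCDF (-(1 / v) * Real.log κ + v / 2) := by
  obtain ⟨x₀, hx₀⟩ := mem_range_tailPotentialIncrement hv (neg_pos.2 (log_neg hR.1 hR.2))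
  have hlog : -(1 / v) * log (exp (-(v * x₀))) = x₀ := by
    rw [log_exp]; field_simp
  refine ⟨exp (-(v * x₀)), ⟨exp_pos _, ?_⟩, fun κ ⟨hκ, h⟩ => ?_⟩
  · rw [div_mul_stdNormalCDF_eq_iff hR.1 hv.ne' (exp_pos _), hlog, hx₀]
  · rw [div_mul_stdNormalCDF_eq_iff hR.1 hv.ne' hκ, ← hx₀] at h
    rw [← (strictMono_tailPotentialIncrement hv).injective h,
      show -(v * (-(1 / v) * log κ)) = log κ by field_simp, exp_log hκ]
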